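/- Let Q_1, Q_2, Q_3, W_1, W_2, W_3 be real numbers with Q_1+Q_2+Q_3 < W_1+W_2+W_3. Set C_2 = min(Q_1,Q_2,Q_3,W_1,W_2,W_3), C_1 = min(Q_1+Q_2, Q_2+Q_3, Q_3+Q_1, W_1+W_2, W_2+W_3, W_3+W_1, Q_1+W_2, Q_2+W_3, Q_3+W_1), C_0 = Q_1+Q_2+Q_3, C_{−1} = Q_1+Q_2+Q_3+W_1+W_2+W_3, and assume the genericity conditions C_2 = 0, C_1 > 0, C_0 > 2·C_1 and C_{−1} > 2·C_0. Set X_1 = min(Q_2, Q_3, W_1, W_2), X_2 = min(Q_2+Q_3, W_1+W_2, Q_3+W_1) − X_1, Y_1^a = Q_1+W_1+X_1, Y_1^b = C_{−1} − (Q_3+W_3+X_1), Y_2^a = Q_1+W_1+min(Q_3,W_2), and Y_2^b = C_{−1} − (Q_3+W_3+min(Q_2,W_1)). If min(Q_2,W_1) = min(Q_3,W_2), then either X_1 = X_2, or both Y_1^a = Y_1^b and Y_2^a = Y_2^b. -/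
import Mathlib


/-- For `g = 2`: if `min(Q_2,W_1) = min(Q_3,W_2)`, then either `X_1 = X_2`, or
both `Y_1^a = Y_1^b` and `Y_2^a = Y_2^b`. -/
theorem ud_eigenvector_g2_degenerate (Q1 Q2 Q3 W1 W2 W3 C2 C1 C0 Cm1
    X1 X2 Y1a Y1b Y2a Y2b : ℝ)
    (hlt : Q1 + Q2 + Q3 < W1 + W2 + W3)
    (hC2 : C2 = min (min (min Q1 Q2) Q3) (min (min W1 W2) W3))
    (hC1 : C1 = min (min (min (min (Q1 + Q2) (Q2 + Q3)) (min (Q3 + Q1) (W1 + W2)))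
          (min (min (W2 + W3) (W3 + W1)) (min (Q1 + W2) (Q2 + W3)))) (Q3 + W1))
    (hC0 : C0 = Q1 + Q2 + Q3)
    (hCm1 : Cm1 = Q1 + Q2 + Q3 + W1 + W2 + W3)
    (hgen2 : C2 = 0) (hgen1 : 0 < C1) (hgen0 : C0 > 2 * C1) (hgenm1 : Cm1 > 2 * C0)
    (hX1 : X1 = min (min Q2 Q3) (min W1 W2))
    (hX2 : X2 = min (min (Q2 + Q3) (W1 + W2)) (Q3 + W1) - X1)
    (hY1a : Y1a = Q1 + W1 + X1)
    (hY1b : Y1b = Cm1 - (Q3 + W3 + X1))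
    (hY2a : Y2a = Q1 + W1 + min Q3 W2)
    (hY2b : Y2b = Cm1 - (Q3 + W3 + min Q2 W1))
    (heq : min Q2 W1 = min Q3 W2) :
    X1 = X2 ∨ (Y1a = Y1b ∧ Y2a = Y2b) := by
  subst hCm1 hX1 hX2 hY1a hY1b hY2a hY2b
  clear hC2 hC1 hC0 hgen2 hgen1 hgen0 hgenm1 hlt
  simp only [min_def] at heq ⊢
  split_ifs at heq ⊢ <;>
    first
      | (left; linarith)
      | (right; exact ⟨by linarith, by linarith⟩)
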